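/- Let 0 < q < 1, let ν be a positive integer and let z ∈ ℂ. Then for every t ∈ ℂ, −((1−q)^ν/log q)·(ν−1)!·e^{t/(1−q)} − t^ν·Σ_{n=1}^∞ q^{ν(n−z)}·e^{t·[n−z]_q} = −((ν−1)!/log q)·Σ_{n=0}^{ν−2} (1−q)^{ν−n}·t^n/n! + t^{ν−1}·Σ_{m=0}^∞ (−1)^m·B_m^{(ν)}(z;q)·t^m/m!, where the series on the right-hand side converges absolutely for every t ∈ ℂ (for ν = 1 the finite sum is empty). -/

import Mathlib

open Complex

/-- `q^w := exp(w · log q)` with the real logarithm of `q`. -/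
noncomputable def qpow (q : ℝ) (w : ℂ) : ℂ := Complex.exp (w * Real.log q)

/-- `[w]_q := (1 - q^w)/(1 - q)`. -/
noncomputable def qbr (q : ℝ) (w : ℂ) : ℂ := (1 - qpow q w) / (1 - (q : ℂ))

/-- the `q`-Bernoulli polynomial `B_m^{(ν)}(z;q)` (closed form). -/
noncomputable def Bq (q : ℝ) (ν : ℕ) (z : ℂ) (m : ℕ) : ℂ :=
  ((q : ℂ) - 1) ^ ((1 : ℤ) - m) *
    ((∑ l ∈ Finset.Icc 1 m, (-1) ^ l * (Nat.choose m l : ℂ) * (l : ℂ) *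
        qpow q (z * (1 - (l : ℂ) - (ν : ℂ))) / (1 - qpow q (1 - (l : ℂ) - (ν : ℂ)))) +
      (1 / (Nat.choose (m + ν - 1) (ν - 1) : ℂ)) * (1 / (Real.log q : ℂ)))

/-!
Put `s = t/(1-q)` and `x_n = q^{n+1-z}`. The closed form of `B_m^{(ν)}` splits
`(-1)^m B_m t^m/m!` into `(q-1) s^m/m! ∑_l C(m,l) a_l` plus a multiple of `s^m/(m+ν-1)!`, where
`a_l = (-1)^l l q^{z(1-l-ν)}/(1-q^{1-l-ν})`.
The second part sums to a truncated exponential series, which produces the finite sum and the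
`e^{t/(1-q)}` term. In the first part, geometric summation gives
`q^{z(1-l-ν)}/(1-q^{1-l-ν}) = -∑_n x_n^{l+ν-1}`, and the binomial sum is a binomial transform,
so its exponential generating function is `e^s` times that of `a_l`. Exchanging the sums over
`l` and `n` then resums the exponential `e^{-s x_n}`, and `e^s x_n^ν e^{-s x_n}` is the summand
`q^{ν(n+1-z)} e^{t [n+1-z]_q}` of the left-hand side. Every series involved converges
absolutely, by comparison with exponential and geometric series.
-/

open Finset Nat

theorem pow_div_factorial_mul_choose (s : ℂ) {m l : ℕ} (hl : l ≤ m) :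
    s ^ m / (m ! : ℂ) * (m.choose l : ℂ) = s ^ l / (l ! : ℂ) * (s ^ (m - l) / ((m - l)! : ℂ)) := by
  have hpow : s ^ m = s ^ l * s ^ (m - l) := by rw [← pow_add, Nat.add_sub_cancel' hl]
  have hm : (m ! : ℂ) ≠ 0 := Nat.cast_ne_zero.mpr (factorial_ne_zero m)
  rw [Nat.cast_choose ℂ hl, hpow]
  field_simp

theorem summable_and_tsum_pow_div_factorial_mul_sum_choose (a : ℕ → ℂ) (s : ℂ)
    (ha : Summable fun l => ‖a l * s ^ l / (l ! : ℂ)‖) :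
    Summable (fun m => ‖s ^ m / (m ! : ℂ) * ∑ l ∈ range (m + 1), (m.choose l : ℂ) * a l‖) ∧
      ∑' m, s ^ m / (m ! : ℂ) * ∑ l ∈ range (m + 1), (m.choose l : ℂ) * a l =
        Complex.exp s * ∑' l, a l * s ^ l / (l ! : ℂ) := by
  have hexp : Summable fun j => ‖s ^ j / (j ! : ℂ)‖ := by
    simpa [norm_div, norm_pow] using Real.summable_pow_div_factorial ‖s‖
  have hcauchy : ∀ m, s ^ m / (m ! : ℂ) * ∑ l ∈ range (m + 1), (m.choose l : ℂ) * a l =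
      ∑ l ∈ range (m + 1), a l * s ^ l / (l ! : ℂ) * (s ^ (m - l) / ((m - l)! : ℂ)) := by
    intro m
    rw [mul_sum]
    refine sum_congr rfl fun l hl => ?_
    rw [← mul_assoc, pow_div_factorial_mul_choose s (Nat.lt_succ_iff.mp (mem_range.mp hl))]
    ring
  simp_rw [hcauchy]
  refine ⟨summable_norm_sum_mul_range_of_summable_norm (f := fun l => a l * s ^ l / (l ! : ℂ))
    (g := fun j => s ^ j / (j ! : ℂ)) ha hexp, ?_⟩
  rw [← tsum_mul_tsum_eq_tsum_sum_range_of_summable_norm (f := fun l => a l * s ^ l / (l ! : ℂ))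
    (g := fun j => s ^ j / (j ! : ℂ)) ha hexp, mul_comm, Complex.exp_eq_exp_ℂ,
    ← (NormedSpace.expSeries_div_hasSum_exp s).tsum_eq]

theorem summable_and_tsum_pow_div_factorial_mul_tsum_pow (x : ℕ → ℂ) {C : ℝ}
    (hC : ∀ n, ‖x n‖ ≤ C) {k : ℕ} (hx : Summable fun n => ‖x n‖ ^ k) (w : ℂ) :
    Summable (fun l => ‖w ^ l / (l ! : ℂ) * ∑' n, x n ^ (l + k)‖) ∧
      ∑' l, w ^ l / (l ! : ℂ) * ∑' n, x n ^ (l + k) = ∑' n, x n ^ k * Complex.exp (w * x n) := by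
  set F : ℕ → ℕ → ℂ := fun l n => w ^ l / (l ! : ℂ) * x n ^ (l + k)
  have hF : Summable fun p : ℕ × ℕ => ‖F p.1 p.2‖ := by
    refine .of_nonneg_of_le (fun _ => norm_nonneg _) (fun ⟨l, n⟩ => ?_)
      ((Real.summable_pow_div_factorial (‖w‖ * C)).mul_of_nonneg (g := fun n => ‖x n‖ ^ k) hx
        (fun _ => by have := (norm_nonneg _).trans (hC 0); positivity) (fun _ => by positivity))
    have hxl : ‖x n‖ ^ l ≤ C ^ l := pow_le_pow_left₀ (norm_nonneg _) (hC n) l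
    simp only [F, norm_mul, norm_div, norm_pow, Complex.norm_natCast, pow_add, mul_pow]
    rw [mul_div_right_comm, mul_assoc]
    gcongr
  have hrow : ∀ l, w ^ l / (l ! : ℂ) * ∑' n, x n ^ (l + k) = ∑' n, F l n := fun l =>
    tsum_mul_left.symm
  have hcol : ∀ n, ∑' l, F l n = x n ^ k * Complex.exp (w * x n) := by
    intro n
    rw [Complex.exp_eq_exp_ℂ, ← (NormedSpace.expSeries_div_hasSum_exp (w * x n)).tsum_eq,
      ← tsum_mul_left]
    exact tsum_congr fun l => by simp only [F]; ring
  simp_rw [hrow]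
  refine ⟨.of_nonneg_of_le (fun _ => norm_nonneg _)
    (fun l => norm_tsum_le_tsum_norm (hF.prod_factor l)) hF.prod, ?_⟩
  rw [← Summable.tsum_comm (f := F) hF.of_norm]
  exact tsum_congr hcol

theorem summable_norm_pow_div_factorial_add (s : ℂ) (k : ℕ) :
    Summable fun m => ‖s ^ m / ((m + k)! : ℂ)‖ := by
  refine .of_nonneg_of_le (fun _ => norm_nonneg _) (fun m => ?_)
    (Real.summable_pow_div_factorial ‖s‖)
  rw [norm_div, norm_pow, Complex.norm_natCast]
  gcongr
  exact m.le_add_right k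

theorem pow_mul_tsum_pow_div_factorial_add (s : ℂ) (k : ℕ) :
    s ^ k * ∑' m, s ^ m / ((m + k)! : ℂ) = Complex.exp s - ∑ i ∈ range k, s ^ i / (i ! : ℂ) := by
  have hexp := NormedSpace.expSeries_div_hasSum_exp s
  rw [Complex.exp_eq_exp_ℂ, ← hexp.tsum_eq, ← hexp.summable.sum_add_tsum_nat_add k, ← tsum_mul_left]
  simp_rw [pow_add, mul_div_assoc', mul_comm (s ^ k)]
  ring

theorem sum_range_pow_sub_mul_pow_div_factorial (a s : ℂ) {N ν : ℕ} (hN : N ≤ ν) :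
    ∑ n ∈ range N, a ^ (ν - n) * (a * s) ^ n / (n ! : ℂ) =
      a ^ ν * ∑ n ∈ range N, s ^ n / (n ! : ℂ) := by
  rw [mul_sum]
  refine sum_congr rfl fun n hn => ?_
  rw [mul_pow, ← pow_sub_mul_pow a (hN.trans' (mem_range.mp hn).le)]
  ring

theorem qpow_add (q : ℝ) (a b : ℂ) : qpow q (a + b) = qpow q a * qpow q b := by
  simp [qpow, add_mul, Complex.exp_add]

theorem qpow_natCast_mul (q : ℝ) (k : ℕ) (w : ℂ) : qpow q (k * w) = qpow q w ^ k := by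
  simp [qpow, mul_assoc, Complex.exp_nat_mul]

theorem qpow_neg (q : ℝ) (w : ℂ) : qpow q (-w) = (qpow q w)⁻¹ := by
  simp [qpow, Complex.exp_neg]

theorem qpow_natCast {q : ℝ} (hq : 0 < q) (k : ℕ) : qpow q k = (q : ℂ) ^ k := by
  rw [← mul_one (k : ℂ), qpow_natCast_mul, qpow, one_mul, ← Complex.ofReal_exp, Real.exp_log hq]

theorem norm_qpow {q : ℝ} (hq : 0 < q) (w : ℂ) : ‖qpow q w‖ = q ^ w.re := by
  rw [qpow, Complex.norm_exp, Real.rpow_def_of_pos hq]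
  simp [Complex.mul_re, mul_comm]

theorem norm_qpow_natCast_add_one_sub {q : ℝ} (hq : 0 < q) (z : ℂ) (n : ℕ) :
    ‖qpow q (n + 1 - z)‖ = q ^ (1 - z.re) * q ^ n := by
  have hre : ((n : ℂ) + 1 - z).re = (1 - z.re) + n := by simp; ring
  rw [norm_qpow hq, hre, Real.rpow_add hq, Real.rpow_natCast]

theorem norm_qpow_natCast_add_one_sub_le {q : ℝ} (hq0 : 0 < q) (hq1 : q ≤ 1) (z : ℂ) (n : ℕ) :
    ‖qpow q (n + 1 - z)‖ ≤ q ^ (1 - z.re) := by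
  rw [norm_qpow_natCast_add_one_sub hq0]
  exact mul_le_of_le_one_right (by positivity) (pow_le_one₀ hq0.le hq1)

theorem summable_norm_qpow_natCast_add_one_sub_pow {q : ℝ} (hq0 : 0 < q) (hq1 : q < 1) (z : ℂ)
    {k : ℕ} (hk : k ≠ 0) : Summable fun n : ℕ => ‖qpow q (n + 1 - z)‖ ^ k := by
  simp_rw [norm_qpow_natCast_add_one_sub hq0, mul_pow, ← pow_mul, mul_comm _ k, pow_mul]
  exact (summable_geometric_of_lt_one (by positivity) (pow_lt_one₀ hq0.le hq1 hk)).mul_left _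

theorem tsum_qpow_natCast_add_one_sub_pow {q : ℝ} (hq0 : 0 < q) (hq1 : q < 1) (z : ℂ) {k : ℕ}
    (hk : k ≠ 0) : ∑' n : ℕ, qpow q (n + 1 - z) ^ k = qpow q (k * (1 - z)) / (1 - (q : ℂ) ^ k) := by
  have hterm : ∀ n : ℕ, qpow q (n + 1 - z) ^ k = qpow q (k * (1 - z)) * ((q : ℂ) ^ k) ^ n := by
    intro n
    rw [← qpow_natCast_mul, ← qpow_natCast hq0, ← qpow_natCast_mul, ← qpow_add]
    congr 1
    ring
  have hnorm : ‖(q : ℂ) ^ k‖ < 1 := by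
    rw [norm_pow, Complex.norm_real, Real.norm_of_nonneg hq0.le]
    exact pow_lt_one₀ hq0.le hq1 hk
  rw [tsum_congr hterm, tsum_mul_left, tsum_geometric_of_norm_lt_one hnorm, div_eq_mul_inv]

theorem qpow_neg_mul_div_one_sub_qpow_neg {q : ℝ} (hq0 : 0 < q) (hq1 : q < 1) (z : ℂ) {k : ℕ}
    (hk : k ≠ 0) : qpow q (-(z * k)) / (1 - qpow q (-k)) = -∑' n : ℕ, qpow q (n + 1 - z) ^ k := by
  have hc : (q : ℂ) ^ k ≠ 0 := pow_ne_zero _ (Complex.ofReal_ne_zero.mpr hq0.ne')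
  have hc1 : (q : ℂ) ^ k - 1 ≠ 0 := by
    rw [sub_ne_zero, ← Complex.ofReal_pow, ← Complex.ofReal_one, Ne, Complex.ofReal_inj]
    exact (pow_lt_one₀ hq0.le hq1 hk).ne
  have hc1' : 1 - (q : ℂ) ^ k ≠ 0 := by rwa [← neg_sub, neg_ne_zero]
  have hsplit : qpow q (k * (1 - z)) = (q : ℂ) ^ k * qpow q (-(z * k)) := by
    rw [← qpow_natCast hq0, ← qpow_add]
    congr 1
    ring
  rw [tsum_qpow_natCast_add_one_sub_pow hq0 hq1 z hk, hsplit, qpow_neg q (k : ℂ), qpow_natCast hq0]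
  field_simp
  ring

theorem qpow_natCast_mul_mul_exp_mul_qbr {q : ℝ} (hq : q ≠ 1) (ν : ℕ) (w s : ℂ) :
    qpow q (ν * w) * Complex.exp ((1 - q) * s * qbr q w) =
      Complex.exp s * (qpow q w ^ ν * Complex.exp (-s * qpow q w)) := by
  have h1q : (1 : ℂ) - q ≠ 0 := sub_ne_zero.mpr (Complex.ofReal_ne_one.mpr hq).symm
  have hexp : (1 - q) * s * qbr q w = s + -s * qpow q w := by
    rw [qbr]
    field_simp
    ring
  rw [qpow_natCast_mul, hexp, Complex.exp_add]
  ring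

section QBernoulli

variable {q : ℝ} {ν : ℕ}

/-- The `l`-th summand of `Bq q ν z m`, without its binomial coefficient. -/
noncomputable def bqCoeff (q : ℝ) (ν : ℕ) (z : ℂ) (l : ℕ) : ℂ :=
  (-1) ^ l * l * (qpow q (z * (1 - l - ν)) / (1 - qpow q (1 - l - ν)))

theorem bqCoeff_succ_mul_pow_div_factorial (hq0 : 0 < q) (hq1 : q < 1) (hν : 0 < ν) (z s : ℂ)
    (j : ℕ) : bqCoeff q ν z (j + 1) * s ^ (j + 1) / ((j + 1)! : ℂ) =
      s * ((-s) ^ j / (j ! : ℂ) * ∑' n : ℕ, qpow q (n + 1 - z) ^ (j + ν)) := by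
  have hexp : z * (1 - ((j + 1 : ℕ) : ℂ) - ν) = -(z * ((j + ν : ℕ) : ℂ)) := by push_cast; ring
  have hbase : 1 - ((j + 1 : ℕ) : ℂ) - ν = -((j + ν : ℕ) : ℂ) := by push_cast; ring
  have hj : (j : ℂ) + 1 ≠ 0 := Nat.cast_add_one_ne_zero j
  have hfac : (j ! : ℂ) ≠ 0 := Nat.cast_ne_zero.mpr (factorial_ne_zero j)
  rw [bqCoeff, hexp, hbase, qpow_neg_mul_div_one_sub_qpow_neg hq0 hq1 z (by omega),
    factorial_succ, neg_pow, pow_succ]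
  push_cast
  field_simp
  ring

theorem summable_and_tsum_bqCoeff_mul_pow_div_factorial (hq0 : 0 < q) (hq1 : q < 1) (hν : 0 < ν)
    (z s : ℂ) :
    Summable (fun l => ‖bqCoeff q ν z l * s ^ l / (l ! : ℂ)‖) ∧
      ∑' l, bqCoeff q ν z l * s ^ l / (l ! : ℂ) =
        s * ∑' n : ℕ, qpow q (n + 1 - z) ^ ν * Complex.exp (-s * qpow q (n + 1 - z)) := by
  obtain ⟨hsum, htsum⟩ := summable_and_tsum_pow_div_factorial_mul_tsum_pow
    (fun n : ℕ => qpow q (n + 1 - z)) (norm_qpow_natCast_add_one_sub_le hq0 hq1.le z)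
    (summable_norm_qpow_natCast_add_one_sub_pow hq0 hq1 z hν.ne') (-s)
  have hshift := bqCoeff_succ_mul_pow_div_factorial hq0 hq1 hν z s
  have hsum' : Summable (fun l => ‖bqCoeff q ν z l * s ^ l / (l ! : ℂ)‖) := by
    refine (summable_nat_add_iff 1).mp ?_
    simp_rw [hshift]
    exact (hsum.mul_left ‖s‖).congr fun l => (norm_mul _ _).symm
  refine ⟨hsum', ?_⟩
  rw [hsum'.of_norm.tsum_eq_zero_add]
  simp_rw [hshift]
  rw [tsum_mul_left, htsum]
  simp [bqCoeff]

theorem neg_one_pow_mul_Bq_mul_pow_div_factorial (hq : q ≠ 1) (z s : ℂ) (m : ℕ) :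
    (-1) ^ m * Bq q ν z m * ((1 - q) * s) ^ m / (m ! : ℂ) =
      (q - 1) * (s ^ m / (m ! : ℂ) * ∑ l ∈ range (m + 1), (m.choose l : ℂ) * bqCoeff q ν z l) +
        (q - 1) / Real.log q * ((ν - 1)! : ℂ) * (s ^ m / ((m + (ν - 1))! : ℂ)) := by
  have hq' : (q : ℂ) - 1 ≠ 0 := sub_ne_zero.mpr (Complex.ofReal_ne_one.mpr hq)
  have hchoose : (m + ν - 1).choose (ν - 1) = (m + (ν - 1)).choose (ν - 1) := by
    rcases ν with _ | ν <;> simp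
  have hbinom : (1 : ℂ) / ((m + (ν - 1)).choose (ν - 1) : ℂ) / (m ! : ℂ) =
      ((ν - 1)! : ℂ) / ((m + (ν - 1))! : ℂ) := by
    have hfac : ∀ n : ℕ, (n ! : ℂ) ≠ 0 := fun n => Nat.cast_ne_zero.mpr (factorial_ne_zero n)
    rw [add_comm m, Nat.cast_add_choose]
    field_simp [hfac]
  have hsum : ∑ l ∈ Icc 1 m, (-1) ^ l * (m.choose l : ℂ) * (l : ℂ) *
        qpow q (z * (1 - (l : ℂ) - (ν : ℂ))) / (1 - qpow q (1 - (l : ℂ) - (ν : ℂ))) =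
      ∑ l ∈ range (m + 1), (m.choose l : ℂ) * bqCoeff q ν z l := by
    rw [sum_subset (fun l hl => mem_range.mpr (Nat.lt_succ_of_le (mem_Icc.mp hl).2))
      fun l hl hl' => ?_]
    · exact sum_congr rfl fun l _ => by rw [bqCoeff]; ring
    · obtain rfl : l = 0 := by simp only [mem_Icc, mem_range] at hl hl'; omega
      simp
  have hpow : (-1) ^ m * ((q : ℂ) - 1) ^ ((1 : ℤ) - m) * ((1 - q) * s) ^ m = (q - 1) * s ^ m := by
    have hsign : (-1 : ℂ) ^ m * (1 - q) ^ m = (q - 1) ^ m := by rw [← mul_pow, neg_one_mul, neg_sub]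
    rw [zpow_sub₀ hq', zpow_one, zpow_natCast, mul_pow]
    calc _ = (q - 1) / (q - 1) ^ m * ((-1 : ℂ) ^ m * (1 - q) ^ m) * s ^ m := by ring
      _ = _ := by rw [hsign, div_mul_cancel₀ _ (pow_ne_zero _ hq')]
  rw [Bq, hsum, hchoose]
  linear_combination (∑ l ∈ range (m + 1), (m.choose l : ℂ) * bqCoeff q ν z l +
      1 / ((m + (ν - 1)).choose (ν - 1) : ℂ) * (1 / Real.log q)) / (m ! : ℂ) * hpow +
    (q - 1) * s ^ m / Real.log q * hbinom

theorem summable_and_tsum_neg_one_pow_mul_Bq_mul_pow_div_factorial (hq0 : 0 < q) (hq1 : q < 1)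
    (hν : 0 < ν) (z s : ℂ) :
    Summable (fun m => ‖(-1) ^ m * Bq q ν z m * ((1 - q) * s) ^ m / (m ! : ℂ)‖) ∧
      ∑' m, (-1) ^ m * Bq q ν z m * ((1 - q) * s) ^ m / (m ! : ℂ) =
        (q - 1) * (Complex.exp s * (s * ∑' n : ℕ, qpow q (n + 1 - z) ^ ν *
            Complex.exp (-s * qpow q (n + 1 - z)))) +
          (q - 1) / Real.log q * ((ν - 1)! : ℂ) * ∑' m, s ^ m / ((m + (ν - 1))! : ℂ) := by
  have hterm := neg_one_pow_mul_Bq_mul_pow_div_factorial (ν := ν) hq1.ne z s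
  obtain ⟨hcoeff, hcoeffSum⟩ := summable_and_tsum_bqCoeff_mul_pow_div_factorial hq0 hq1 hν z s
  obtain ⟨hG, hGsum⟩ := summable_and_tsum_pow_div_factorial_mul_sum_choose _ s hcoeff
  have hH := summable_norm_pow_div_factorial_add s (ν - 1)
  simp_rw [hterm]
  refine ⟨.of_nonneg_of_le (fun _ => norm_nonneg _)
    (fun m => (norm_add_le _ _).trans (add_le_add (norm_mul_le _ _) (norm_mul_le _ _)))
    ((hG.mul_left _).add (hH.mul_left _)), ?_⟩
  rw [(hG.of_norm.mul_left _).tsum_add (hH.of_norm.mul_left _), tsum_mul_left, tsum_mul_left,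
    hGsum, hcoeffSum]

end QBernoulli

theorem stmt12 (q : ℝ) (hq0 : 0 < q) (hq1 : q < 1) (ν : ℕ) (hν : 0 < ν) (z : ℂ) :
    ∀ t : ℂ,
      Summable (fun m : ℕ => ‖(-1) ^ m * Bq q ν z m * t ^ m / (Nat.factorial m : ℂ)‖) ∧
      -((((1 - q) ^ ν : ℝ) : ℂ) / (Real.log q : ℂ)) * (Nat.factorial (ν - 1) : ℂ) *
          Complex.exp (t / (1 - (q : ℂ))) -
        t ^ ν * ∑' n : ℕ, qpow q ((ν : ℂ) * (((n : ℂ) + 1) - z)) *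
          Complex.exp (t * qbr q (((n : ℂ) + 1) - z)) =
      -((Nat.factorial (ν - 1) : ℂ) / (Real.log q : ℂ)) *
          (∑ n ∈ Finset.range (ν - 1),
            (((1 - q) ^ (ν - n) : ℝ) : ℂ) * t ^ n / (Nat.factorial n : ℂ)) +
        t ^ (ν - 1) * ∑' m : ℕ, (-1) ^ m * Bq q ν z m * t ^ m / (Nat.factorial m : ℂ) := by
  intro t
  have h1q : (1 : ℂ) - q ≠ 0 := sub_ne_zero.mpr (Complex.ofReal_ne_one.mpr hq1.ne).symm
  obtain ⟨s, rfl⟩ : ∃ s, t = (1 - q) * s := ⟨t / (1 - q), (mul_div_cancel₀ t h1q).symm⟩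
  obtain ⟨hsum, htsum⟩ := summable_and_tsum_neg_one_pow_mul_Bq_mul_pow_div_factorial hq0 hq1 hν z s
  refine ⟨hsum, ?_⟩
  have hseries : ∑' n : ℕ, qpow q ((ν : ℂ) * ((n : ℂ) + 1 - z)) *
        Complex.exp ((1 - q) * s * qbr q ((n : ℂ) + 1 - z)) =
      Complex.exp s * ∑' n : ℕ, qpow q (n + 1 - z) ^ ν * Complex.exp (-s * qpow q (n + 1 - z)) := by
    rw [← tsum_mul_left]
    exact tsum_congr fun n => qpow_natCast_mul_mul_exp_mul_qbr hq1.ne _ _ _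
  push_cast
  rw [mul_div_cancel_left₀ s h1q, htsum, hseries,
    sum_range_pow_sub_mul_pow_div_factorial _ _ (Nat.sub_le ν 1)]
  obtain ⟨k, rfl⟩ : ∃ k, ν = k + 1 := ⟨ν - 1, by omega⟩
  simp only [Nat.add_sub_cancel, mul_pow]
  linear_combination -(1 - (q : ℂ)) ^ k * ((q - 1) / Real.log q * k !) *
    pow_mul_tsum_pow_div_factorial_add s k
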